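/- arXiv:2512.01276 — 6 statements merged into one kernel-verified Lean document; each statement's English description precedes it below -/
import Mathlib

section
/- Let X be a finite nonempty type, H ⊆ X a nonempty set, ε > 0 a real, and k ∈ ℕ. If a probability distribution 𝒟 on X (ε,k)-misses H, then there exists a set A ⊆ X such that Unif(H)(A) − 𝒟(A) ≥ 1 − ε − k/|H|, where Unif(H) is the uniform distribution on H. In particular, the total variation distance between 𝒟 and Unif(H) is at least 1 − ε − k/|H|. -/
open Finset

/-- A distribution `D` on a finite type `(ε,k)`-misses a set `H` if there is a set `Hstar`
of size at most `k` with `D(H \ Hstar) < ε`. -/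
def Misses {X : Type*} [Fintype X] [DecidableEq X]
    (D : X → ℝ) (H : Finset X) (ε : ℝ) (k : ℕ) : Prop :=
  ∃ Hstar : Finset X, Hstar.card ≤ k ∧ ∑ x ∈ H \ Hstar, D x < ε

/-- if a distribution `D` on a finite nonempty type `(ε,k)`-misses a nonempty
set `H`, then there is an event `A` on which the uniform distribution on `H` exceeds `D` by at
least `1 - ε - k/|H|`; in particular the total variation distance between `D` and `Unif(H)`
is at least `1 - ε - k/|H|`. -/
theorem stmt0 {X : Type*} [Fintype X] [DecidableEq X] [Nonempty X]
    (H : Finset X) (hH : H.Nonempty) (ε : ℝ) (hε : 0 < ε) (k : ℕ)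
    (D : X → ℝ) (hD0 : ∀ x, 0 ≤ D x) (hD1 : ∑ x, D x = 1)
    (hmiss : Misses D H ε k) :
    (∃ A : Finset X,
      1 - ε - (k : ℝ) / H.card ≤ ((A ∩ H).card : ℝ) / H.card - ∑ x ∈ A, D x) ∧
    1 - ε - (k : ℝ) / H.card ≤
      (1 / 2) * ∑ x, |D x - (if x ∈ H then (1 : ℝ) / H.card else 0)| := by
  obtain ⟨Hstar, hcard, hsum⟩ := hmiss
  set A := H \ Hstar with hA
  have hHpos : (0 : ℝ) < H.card := by exact_mod_cast hH.card_pos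
  have hAH : A ∩ H = A := by
    apply inter_eq_left.mpr
    exact sdiff_subset
  have hAcard : (H.card : ℝ) - k ≤ (A ∩ H).card := by
    rw [hAH]
    have h1 : H.card ≤ (H \ Hstar).card + Hstar.card := card_le_card_sdiff_add_card
    have h2 : H.card ≤ A.card + k := by
      rw [hA]; omega
    push_cast
    have : ((A.card : ℝ) + k) ≥ H.card := by exact_mod_cast h2
    linarith
  have key : 1 - ε - (k : ℝ) / H.card ≤ ((A ∩ H).card : ℝ) / H.card - ∑ x ∈ A, D x := by
    have h1 : (1 : ℝ) - (k : ℝ) / H.card ≤ ((A ∩ H).card : ℝ) / H.card := by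
      have heq : (1 : ℝ) - (k : ℝ) / H.card = ((H.card : ℝ) - k) / H.card := by
        field_simp
      rw [heq, div_le_div_iff_of_pos_right hHpos]
      exact hAcard
    linarith [hsum]
  refine ⟨⟨A, key⟩, ?_⟩
  -- TV distance part
  set U : X → ℝ := fun x => if x ∈ H then (1 : ℝ) / H.card else 0 with hU
  have hUsum : ∑ x, U x = 1 := by
    rw [hU]
    rw [Finset.sum_ite_mem, Finset.univ_inter, Finset.sum_const, nsmul_eq_mul]
    field_simp
  have hUA : ∑ x ∈ A, U x = ((A ∩ H).card : ℝ) / H.card := by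
    rw [hU, Finset.sum_ite_mem, Finset.sum_const, nsmul_eq_mul]
    ring
  have step : ∑ x ∈ A, (U x - D x) ≤ (1/2) * ∑ x, |D x - U x| := by
    have h1 : ∀ x, U x - D x ≤ (|D x - U x| + (U x - D x)) / 2 := by
      intro x
      have := abs_nonneg (D x - U x)
      have := neg_abs_le (D x - U x)
      linarith
    have h2 : ∀ x, 0 ≤ (|D x - U x| + (U x - D x)) / 2 := by
      intro x
      have := le_abs_self (D x - U x)
      linarith
    calc ∑ x ∈ A, (U x - D x) ≤ ∑ x ∈ A, (|D x - U x| + (U x - D x)) / 2 :=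
          Finset.sum_le_sum fun x _ => h1 x
      _ ≤ ∑ x, (|D x - U x| + (U x - D x)) / 2 :=
          Finset.sum_le_sum_of_subset_of_nonneg (Finset.subset_univ A) fun x _ _ => h2 x
      _ = (1/2) * ∑ x, |D x - U x| := by
          rw [← Finset.sum_div, Finset.sum_add_distrib, Finset.sum_sub_distrib, hUsum, hD1]
          ring
  have hAsum : ∑ x ∈ A, (U x - D x) = ((A ∩ H).card : ℝ) / H.card - ∑ x ∈ A, D x := by
    rw [Finset.sum_sub_distrib, hUA]
  linarith [key, step, hAsum.symm.le]
end

section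
/- Let n ∈ ℕ, let δ ∈ (0,1], let ε ≥ 2δ be real, and let k ∈ ℕ. Let 𝐇 be a random subset of {0,1}^n in which each point x ∈ {0,1}^n is included independently with probability δ (i.e., the indicators 1[x ∈ 𝐇], x ∈ {0,1}^n, are independent Bernoulli(δ) random variables). Then for any fixed probability distribution 𝒟 on {0,1}^n, the probability (over 𝐇) that 𝒟 (ε,k)-hits 𝐇 is at most e^{−εk/6}. -/
open Finset MeasureTheory ProbabilityTheory

/-- A distribution `D` on a finite type `(ε,k)`-hits a set `H` if for every set `Hstar`
of size at most `k` we have `D(H \ Hstar) ≥ ε`. -/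
def Hits {X : Type*} [Fintype X] [DecidableEq X]
    (D : X → ℝ) (H : Finset X) (ε : ℝ) (k : ℕ) : Prop :=
  ∀ Hstar : Finset X, Hstar.card ≤ k → ε ≤ ∑ x ∈ H \ Hstar, D x

private lemma exp_smul_le {a : ℝ} (s : ℝ) (ha : 0 ≤ a) (ha1 : a ≤ 1) :
    Real.exp (a * s) ≤ 1 + a * (Real.exp s - 1) := by
  have h := convexOn_exp.2 (Set.mem_univ s) (Set.mem_univ (0:ℝ)) ha (by linarith)
    (by ring : a + (1 - a) = 1)
  simp only [smul_eq_mul, mul_zero, add_zero, Real.exp_zero, mul_one] at h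
  linarith

/-- if `𝐇` is a random subset of `{0,1}^n` whose inclusion indicators are
i.i.d. Bernoulli(δ), then any fixed distribution `D` `(ε,k)`-hits `𝐇` with probability at
most `e^{-εk/6}`, provided `ε ≥ 2δ`. -/
theorem stmt2 (n : ℕ) (δ : ℝ) (hδ0 : 0 < δ) (hδ1 : δ ≤ 1)
    {Ω : Type*} [MeasurableSpace Ω] (μ : Measure Ω) [IsProbabilityMeasure μ]
    (H : Ω → Finset (Fin n → Bool))
    (hind : iIndepFun (m := fun _ : Fin n → Bool => (inferInstance : MeasurableSpace Bool))
      (fun x ω => decide (x ∈ H ω)) μ)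
    (hber : ∀ x : Fin n → Bool, μ {ω | x ∈ H ω} = ENNReal.ofReal δ)
    (D : (Fin n → Bool) → ℝ) (hD0 : ∀ x, 0 ≤ D x) (hD1 : ∑ x, D x = 1)
    (ε : ℝ) (hε : 2 * δ ≤ ε) (k : ℕ) :
    μ {ω | Hits D (H ω) ε k} ≤ ENNReal.ofReal (Real.exp (-(ε * k) / 6)) := by
  classical
  rcases Nat.eq_zero_or_pos k with hk0 | hk
  · subst hk0
    simp only [Nat.cast_zero, mul_zero, neg_zero, zero_div, Real.exp_zero, ENNReal.ofReal_one]
    exact prob_le_one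
  have hkR : (0:ℝ) < k := by exact_mod_cast hk
  have hε0 : 0 < ε := lt_of_lt_of_le (by linarith) hε
  -- the heavy points
  set L : Finset (Fin n → Bool) := Finset.univ.filter (fun x => 1 / (k:ℝ) < D x) with hL
  have hsumL : ∑ x ∈ L, D x ≤ 1 := by
    rw [← hD1]
    exact Finset.sum_le_sum_of_subset_of_nonneg (Finset.subset_univ L) (fun x _ _ => hD0 x)
  have hLcard : (L.card : ℝ) ≤ k := by
    have h1 : (L.card : ℝ) * (1/(k:ℝ)) ≤ ∑ x ∈ L, D x := by
      have := Finset.card_nsmul_le_sum L D (1/(k:ℝ))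
        (fun x hx => le_of_lt (Finset.mem_filter.mp hx).2)
      simpa [nsmul_eq_mul] using this
    have h2 : (L.card : ℝ) * (1/k) ≤ 1 := h1.trans hsumL
    have h3 : (L.card:ℝ) = (L.card * (1/k)) * k := by field_simp
    nlinarith
  have hLk : L.card ≤ k := by exact_mod_cast hLcard
  set t : ℝ := (k:ℝ) * Real.log 2 with ht
  have ht0 : 0 ≤ t := mul_nonneg hkR.le (Real.log_nonneg one_le_two)
  set c : (Fin n → Bool) → ℝ := fun x => Real.exp (t * D x) - 1 with hcdef
  have hc0 : ∀ x, 0 ≤ c x := by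
    intro x
    have h1 : (1:ℝ) ≤ Real.exp (t * D x) := Real.one_le_exp (mul_nonneg ht0 (hD0 x))
    simp only [hcdef]
    linarith
  have hckD : ∀ x ∈ Finset.univ \ L, c x ≤ (k:ℝ) * D x := by
    intro x hx
    have hxL : x ∉ L := (Finset.mem_sdiff.mp hx).2
    have hDx : D x ≤ 1/(k:ℝ) := by
      by_contra hcon
      exact hxL (by simp only [hL, Finset.mem_filter, Finset.mem_univ, true_and]; exact (not_le.mp hcon))
    have ha0 : 0 ≤ (k:ℝ) * D x := mul_nonneg hkR.le (hD0 x)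
    have ha1 : (k:ℝ) * D x ≤ 1 := by
      rw [le_div_iff₀ hkR] at hDx
      linarith [hDx]
    have h := exp_smul_le (Real.log 2) ha0 ha1
    rw [Real.exp_log two_pos] at h
    have harg : t * D x = ((k:ℝ) * D x) * Real.log 2 := by rw [ht]; ring
    simp only [hcdef]
    rw [harg]
    linarith
  -- measure of positive cylinders
  have hA : ∀ G : Finset (Fin n → Bool),
      μ (⋂ x ∈ G, {ω | x ∈ H ω}) = ENNReal.ofReal δ ^ G.card := by
    intro G
    have hpre : ∀ x : Fin n → Bool,
        (fun ω => decide (x ∈ H ω)) ⁻¹' {true} = {ω | x ∈ H ω} := by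
      intro x; ext ω; simp
    have h := hind.measure_inter_preimage_eq_mul (μ := μ) G (sets := fun _ => {true})
      (fun i _ => measurableSet_singleton true)
    simp only [hpre] at h
    rw [h, Finset.prod_congr rfl (fun x _ => hber x), Finset.prod_const]
  set C : Finset (Fin n → Bool) → Set Ω :=
    fun G => toMeasurable μ (⋂ x ∈ G, {ω | x ∈ H ω}) with hCdef
  have hCmeas : ∀ G, MeasurableSet (C G) := fun G => measurableSet_toMeasurable μ _
  have hμC : ∀ G : Finset (Fin n → Bool), μ (C G) = ENNReal.ofReal δ ^ G.card := by
    intro G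
    rw [hCdef]
    rw [measure_toMeasurable]
    exact hA G
  set f : Ω → ENNReal := fun ω => ∑ G ∈ (Finset.univ \ L).powerset,
    (C G).indicator (fun _ => ENNReal.ofReal (∏ x ∈ G, c x)) ω with hfdef
  -- pointwise bound: Hits ⟹ f is large
  have hsub : {ω | Hits D (H ω) ε k} ⊆ {ω | ENNReal.ofReal (Real.exp (t * ε)) ≤ f ω} := by
    intro ω hω
    simp only [Set.mem_setOf_eq] at hω ⊢
    have hcard : (H ω ∩ L).card ≤ k :=
      le_trans (Finset.card_le_card Finset.inter_subset_right) hLk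
    have h1 : ε ≤ ∑ x ∈ H ω \ L, D x := by
      have := hω (H ω ∩ L) hcard
      rwa [Finset.sdiff_inter_self_left] at this
    have h2 : Real.exp (t * ε) ≤ ∑ G ∈ (Finset.univ \ L).powerset,
        ∏ x ∈ G, (c x * (if x ∈ H ω then (1:ℝ) else 0)) := by
      have e1 : Real.exp (t * ε) ≤ Real.exp (t * ∑ x ∈ H ω \ L, D x) :=
        Real.exp_le_exp.mpr (mul_le_mul_of_nonneg_left h1 ht0)
      have e2 : Real.exp (t * ∑ x ∈ H ω \ L, D x) = ∏ x ∈ H ω \ L, Real.exp (t * D x) := by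
        rw [Finset.mul_sum, Real.exp_sum]
      have e3 : (Finset.univ \ L).filter (fun x => x ∈ H ω) = H ω \ L := by
        ext x
        simp only [Finset.mem_sdiff, Finset.mem_filter, Finset.mem_univ, true_and]
        tauto
      have e4 : ∏ x ∈ H ω \ L, Real.exp (t * D x)
          = ∏ x ∈ Finset.univ \ L, (c x * (if x ∈ H ω then (1:ℝ) else 0) + 1) := by
        rw [← e3, Finset.prod_filter]
        refine Finset.prod_congr rfl (fun x _ => ?_)
        by_cases hx : x ∈ H ω <;> simp [hx, hcdef]
      have e5 : ∏ x ∈ Finset.univ \ L, (c x * (if x ∈ H ω then (1:ℝ) else 0) + 1)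
          = ∑ G ∈ (Finset.univ \ L).powerset,
            ∏ x ∈ G, (c x * (if x ∈ H ω then (1:ℝ) else 0)) := by
        rw [Finset.prod_add]
        simp
      rw [e2, e4, e5] at e1
      exact e1
    have hterm0 : ∀ G ∈ (Finset.univ \ L).powerset,
        0 ≤ ∏ x ∈ G, (c x * (if x ∈ H ω then (1:ℝ) else 0)) := by
      intro G _
      refine Finset.prod_nonneg (fun x _ => mul_nonneg (hc0 x) ?_)
      split <;> norm_num
    calc ENNReal.ofReal (Real.exp (t * ε))
        ≤ ENNReal.ofReal (∑ G ∈ (Finset.univ \ L).powerset,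
            ∏ x ∈ G, (c x * (if x ∈ H ω then (1:ℝ) else 0))) := ENNReal.ofReal_le_ofReal h2
      _ = ∑ G ∈ (Finset.univ \ L).powerset,
            ENNReal.ofReal (∏ x ∈ G, (c x * (if x ∈ H ω then (1:ℝ) else 0))) :=
          ENNReal.ofReal_sum_of_nonneg hterm0
      _ ≤ f ω := by
          rw [hfdef]
          refine Finset.sum_le_sum (fun G hG => ?_)
          by_cases hGH : ∀ x ∈ G, x ∈ H ω
          · have he : ∏ x ∈ G, (c x * (if x ∈ H ω then (1:ℝ) else 0)) = ∏ x ∈ G, c x :=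
              Finset.prod_congr rfl (fun x hx => by simp [hGH x hx])
            have hmem : ω ∈ C G := by
              rw [hCdef]
              exact subset_toMeasurable μ _ (Set.mem_iInter₂.mpr (fun x hx => hGH x hx))
            rw [he, Set.indicator_of_mem hmem]
          · push_neg at hGH
            obtain ⟨x, hxG, hxH⟩ := hGH
            have he : ∏ x ∈ G, (c x * (if x ∈ H ω then (1:ℝ) else 0)) = 0 :=
              Finset.prod_eq_zero hxG (by simp [hxH])
            rw [he, ENNReal.ofReal_zero]
            exact zero_le
  -- Markov + independence
  have hfmeas : Measurable f :=
    Finset.measurable_sum _ (fun G _ => Measurable.indicator measurable_const (hCmeas G))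
  have hmark := mul_meas_ge_le_lintegral₀ (μ := μ) hfmeas.aemeasurable
    (ENNReal.ofReal (Real.exp (t * ε)))
  have hint : ∫⁻ ω, f ω ∂μ = ∑ G ∈ (Finset.univ \ L).powerset,
      ENNReal.ofReal (∏ x ∈ G, c x) * μ (C G) := by
    rw [hfdef]
    rw [lintegral_finset_sum _ (fun G _ => Measurable.indicator measurable_const (hCmeas G))]
    exact Finset.sum_congr rfl (fun G _ => lintegral_indicator_const (hCmeas G) _)
  have hsum : ∑ G ∈ (Finset.univ \ L).powerset, ENNReal.ofReal (∏ x ∈ G, c x) * μ (C G)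
      ≤ ENNReal.ofReal (Real.exp (δ * k)) := by
    have e1 : ∀ G ∈ (Finset.univ \ L).powerset,
        ENNReal.ofReal (∏ x ∈ G, c x) * μ (C G) = ENNReal.ofReal (∏ x ∈ G, (c x * δ)) := by
      intro G _
      rw [hμC G, ← ENNReal.ofReal_pow hδ0.le,
        ← ENNReal.ofReal_mul (Finset.prod_nonneg (fun x _ => hc0 x))]
      congr 1
      rw [Finset.prod_mul_distrib, Finset.prod_const]
    rw [Finset.sum_congr rfl e1,
      ← ENNReal.ofReal_sum_of_nonneg
        (fun G _ => Finset.prod_nonneg (fun x _ => mul_nonneg (hc0 x) hδ0.le))]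
    apply ENNReal.ofReal_le_ofReal
    have e2 : ∑ G ∈ (Finset.univ \ L).powerset, ∏ x ∈ G, (c x * δ)
        = ∏ x ∈ Finset.univ \ L, (c x * δ + 1) := by
      rw [Finset.prod_add]
      simp
    rw [e2]
    have e3 : ∏ x ∈ Finset.univ \ L, (c x * δ + 1)
        ≤ ∏ x ∈ Finset.univ \ L, Real.exp (c x * δ) := by
      refine Finset.prod_le_prod (fun x _ => ?_) (fun x _ => Real.add_one_le_exp _)
      have := mul_nonneg (hc0 x) hδ0.le
      linarith
    refine e3.trans ?_
    rw [← Real.exp_sum]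
    apply Real.exp_le_exp.mpr
    have e4 : ∑ x ∈ Finset.univ \ L, c x * δ ≤ ∑ x ∈ Finset.univ \ L, ((k:ℝ) * D x) * δ :=
      Finset.sum_le_sum (fun x hx => mul_le_mul_of_nonneg_right (hckD x hx) hδ0.le)
    refine e4.trans ?_
    have e5 : ∑ x ∈ Finset.univ \ L, ((k:ℝ) * D x) * δ ≤ ∑ x ∈ Finset.univ, ((k:ℝ) * D x) * δ :=
      Finset.sum_le_sum_of_subset_of_nonneg Finset.sdiff_subset
        (fun x _ _ => mul_nonneg (mul_nonneg hkR.le (hD0 x)) hδ0.le)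
    refine e5.trans (le_of_eq ?_)
    have : ∑ x : Fin n → Bool, ((k:ℝ) * D x) * δ = ((k:ℝ) * δ) * ∑ x, D x := by
      rw [Finset.mul_sum]
      exact Finset.sum_congr rfl (fun x _ => by ring)
    rw [this, hD1]
    ring
  -- assemble
  set a : ENNReal := ENNReal.ofReal (Real.exp (t * ε)) with ha
  have ha0 : a ≠ 0 := by
    rw [ha]
    simp [ENNReal.ofReal_eq_zero, not_le, Real.exp_pos]
  have hatop : a ≠ ⊤ := ENNReal.ofReal_ne_top
  have h2 : a * μ {ω | a ≤ f ω} ≤ ENNReal.ofReal (Real.exp (δ * k)) :=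
    le_trans hmark (le_trans (le_of_eq hint) hsum)
  have key : μ {ω | Hits D (H ω) ε k} ≤ a⁻¹ * ENNReal.ofReal (Real.exp (δ * k)) := by
    calc μ {ω | Hits D (H ω) ε k} ≤ μ {ω | a ≤ f ω} := measure_mono hsub
      _ = a⁻¹ * (a * μ {ω | a ≤ f ω}) := by
          rw [← mul_assoc, ENNReal.inv_mul_cancel ha0 hatop, one_mul]
      _ ≤ a⁻¹ * ENNReal.ofReal (Real.exp (δ * k)) := mul_le_mul_right h2 _
  refine key.trans ?_
  have heq : a⁻¹ * ENNReal.ofReal (Real.exp (δ * k))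
      = ENNReal.ofReal (Real.exp (δ * k - t * ε)) := by
    rw [ha, ← ENNReal.ofReal_inv_of_pos (Real.exp_pos _), ← Real.exp_neg,
      ← ENNReal.ofReal_mul (Real.exp_nonneg _), ← Real.exp_add]
    congr 1
    ring
  rw [heq]
  apply ENNReal.ofReal_le_ofReal
  apply Real.exp_le_exp.mpr
  have hlog : (0.6931471803 : ℝ) < Real.log 2 := Real.log_two_gt_d9
  have hεk : (0:ℝ) ≤ ε * k := mul_nonneg hε0.le hkR.le
  have hδεk : 2 * δ * k ≤ ε * k := mul_le_mul_of_nonneg_right hε hkR.le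
  have hlogk : (ε * k) * 0.6931471803 ≤ (ε * k) * Real.log 2 :=
    mul_le_mul_of_nonneg_left hlog.le hεk
  rw [ht]
  nlinarith
end

section
/- Let X be a finite type, H ⊆ X, ε > 0 a real, k ∈ ℕ, and let 𝒟 be a probability distribution on X that (ε,k)-misses H. Then for every integer m ≥ 1, ∑_{x∈H} 𝒟(x)·(1 − 𝒟(x))^m ≤ ε + k/(e·m). (This quantity is the expected error, over an i.i.d. sample of size m from 𝒟, of the learner that memorizes the labels of the sample and predicts 0 on unseen points, when the target function vanishes outside H; hence evasive sets admit efficient memorization learners.) -/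
open Finset

lemma key_bound (p : ℝ) (hp0 : 0 ≤ p) (hp1 : p ≤ 1) (m : ℕ) (hm : 1 ≤ m) :
    p * (1 - p) ^ m ≤ 1 / (Real.exp 1 * m) := by
  have hm' : (1 : ℝ) ≤ m := by exact_mod_cast hm
  have h1 : (1 - p) ^ m ≤ Real.exp (-(p * m)) := by
    calc (1 - p) ^ m ≤ Real.exp (-p) ^ m := by
          apply pow_le_pow_left₀ (by linarith)
          linarith [Real.add_one_le_exp (-p)]
      _ = Real.exp (-(p * m)) := by
          rw [← Real.exp_nat_mul]; ring_nf
  have h2 : p * (1 - p) ^ m ≤ p * Real.exp (-(p * m)) :=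
    mul_le_mul_of_nonneg_left h1 hp0
  have h3 : p * m * Real.exp (-(p * m)) ≤ Real.exp (-1) := by
    set t := p * m with ht
    have ht0 : 0 ≤ t := mul_nonneg hp0 (by positivity)
    have : t ≤ Real.exp (t - 1) := by linarith [Real.add_one_le_exp (t - 1)]
    calc t * Real.exp (-t) ≤ Real.exp (t - 1) * Real.exp (-t) := by
          apply mul_le_mul_of_nonneg_right this (Real.exp_nonneg _)
      _ = Real.exp (-1) := by rw [← Real.exp_add]; ring_nf
  have hmpos : (0 : ℝ) < m := by linarith
  have hepos := Real.exp_pos 1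
  rw [le_div_iff₀ (by positivity)]
  calc p * (1 - p) ^ m * (Real.exp 1 * m)
      ≤ p * Real.exp (-(p * m)) * (Real.exp 1 * m) := by
        apply mul_le_mul_of_nonneg_right h2 (by positivity)
    _ = (p * m * Real.exp (-(p * m))) * Real.exp 1 := by ring
    _ ≤ Real.exp (-1) * Real.exp 1 := by
        apply mul_le_mul_of_nonneg_right h3 (Real.exp_nonneg _)
    _ = 1 := by rw [← Real.exp_add]; simp

/-- evasiveness implies efficient memorization learners: if a distribution `D`
`(ε,k)`-misses `H`, then for every sample size `m ≥ 1` the expected error of the memorizing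
learner, `∑_{x ∈ H} D(x)·(1 - D(x))^m`, is at most `ε + k/(e·m)`. -/
theorem stmt4 {X : Type*} [Fintype X] [DecidableEq X]
    (H : Finset X) (ε : ℝ) (hε : 0 < ε) (k : ℕ)
    (D : X → ℝ) (hD0 : ∀ x, 0 ≤ D x) (hD1 : ∑ x, D x = 1)
    (hmiss : Misses D H ε k) :
    ∀ m : ℕ, 1 ≤ m →
      ∑ x ∈ H, D x * (1 - D x) ^ m ≤ ε + (k : ℝ) / (Real.exp 1 * m) := by
  intro m hm
  obtain ⟨Hstar, hcard, hsum⟩ := hmiss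
  have hmpos : (0 : ℝ) < m := by exact_mod_cast hm
  have hD1' : ∀ x, D x ≤ 1 := by
    intro x
    calc D x ≤ ∑ y, D y := Finset.single_le_sum (fun y _ => hD0 y) (mem_univ x)
      _ = 1 := hD1
  have hsplit : ∑ x ∈ H, D x * (1 - D x) ^ m =
      ∑ x ∈ H \ Hstar, D x * (1 - D x) ^ m + ∑ x ∈ H ∩ Hstar, D x * (1 - D x) ^ m := by
    rw [← Finset.sum_union (Finset.disjoint_sdiff_inter H Hstar)]
    congr 1
    rw [Finset.sdiff_union_inter]
  rw [hsplit]
  have term_nonneg : ∀ x, 0 ≤ D x * (1 - D x) ^ m := fun x =>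
    mul_nonneg (hD0 x) (pow_nonneg (by linarith [hD1' x]) m)
  have h1 : ∑ x ∈ H \ Hstar, D x * (1 - D x) ^ m ≤ ε := by
    calc ∑ x ∈ H \ Hstar, D x * (1 - D x) ^ m ≤ ∑ x ∈ H \ Hstar, D x := by
          apply Finset.sum_le_sum
          intro x _
          exact mul_le_of_le_one_right (hD0 x)
            (pow_le_one₀ (by linarith [hD1' x]) (by linarith [hD0 x]))
      _ ≤ ε := le_of_lt hsum
  have h2 : ∑ x ∈ H ∩ Hstar, D x * (1 - D x) ^ m ≤ (k : ℝ) / (Real.exp 1 * m) := by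
    calc ∑ x ∈ H ∩ Hstar, D x * (1 - D x) ^ m
        ≤ ∑ _x ∈ H ∩ Hstar, 1 / (Real.exp 1 * m) := by
          apply Finset.sum_le_sum
          intro x _
          exact key_bound (D x) (hD0 x) (hD1' x) m hm
      _ = (H ∩ Hstar).card / (Real.exp 1 * m) := by
          rw [Finset.sum_const, nsmul_eq_mul]; ring
      _ ≤ (k : ℝ) / (Real.exp 1 * m) := by
          gcongr
          exact_mod_cast le_trans (Finset.card_le_card Finset.inter_subset_right) hcard
  linarith
end

section
/- Let X be a finite type, H ⊆ X, ε > 0 a real, and k ≥ 1 a natural number. Suppose a probability distribution 𝒟 on X (ε,k)-hits H. Let m := ⌈2k/ε⌉ and let 𝐲^{(1)},…,𝐲^{(m)} be drawn i.i.d. from 𝒟. Then with probability at least 1/2, the samples contain at least k distinct elements of H; that is, Pr[ ∑_{x∈H} 1[x ∈ {𝐲^{(1)},…,𝐲^{(m)}}] ≥ k ] ≥ 1/2. -/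
open Finset MeasureTheory ProbabilityTheory
open scoped ENNReal

private def idx (m t : ℕ) : Finset (Fin m) := Finset.univ.filter fun i => (i : ℕ) < t

private lemma idx_mono {m t t' : ℕ} (h : t ≤ t') : idx m t ⊆ idx m t' := by
  intro i hi
  simp only [idx, Finset.mem_filter] at *
  exact ⟨hi.1, lt_of_lt_of_le hi.2 h⟩

private lemma mem_idx {m t : ℕ} {i : Fin m} : i ∈ idx m t ↔ (i : ℕ) < t := by
  simp [idx]

private lemma idx_succ {m t : ℕ} (ht : t < m) :
    idx m (t + 1) = insert ⟨t, ht⟩ (idx m t) := by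
  ext i
  simp only [mem_idx, Finset.mem_insert, Fin.ext_iff, mem_idx]
  omega

private lemma idx_self (m : ℕ) : idx m m = Finset.univ := by
  ext i; simp [mem_idx, i.isLt]

private theorem aux {X : Type*} [Fintype X] [DecidableEq X] [MeasurableSpace X]
    [MeasurableSingletonClass X]
    (H : Finset X) (ε : ℝ) (hε : 0 < ε) (k : ℕ) (hk : 1 ≤ k)
    (D : X → ℝ) (hD0 : ∀ x, 0 ≤ D x)
    (hhit : Hits D H ε k)
    {Ω : Type*} [MeasurableSpace Ω] (μ : Measure Ω) [IsProbabilityMeasure μ]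
    (m : ℕ) (h2k : 2 * (k : ℝ) ≤ m * ε)
    (y : Fin m → Ω → X)
    (hmeas : ∀ i, Measurable (y i))
    (hind : iIndepFun y μ)
    (hlaw : ∀ i a, μ {ω | y i ω = a} = ENNReal.ofReal (D a))
    (x₀ : X) :
    ENNReal.ofReal (1 / 2) ≤
      μ {ω | k ≤ (H ∩ Finset.image (fun i => y i ω) Finset.univ).card} := by
  classical
  set gv : ℕ → (Fin m → X) → ℕ := fun t v => min k (H ∩ (idx m t).image v).card with hgv
  set fk : ℕ → Ω → ℕ := fun t ω => gv t (fun i => y i ω) with hfk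
  set tr : ℕ → (Fin m → X) → (Fin m → X) := fun t v i => if (i : ℕ) < t then v i else x₀
    with htr
  set A : ℕ → (Fin m → X) → Set Ω := fun t v => {ω | tr t (fun i => y i ω) = v} with hA
  -- basic facts
  have hAmem : ∀ t ω, ω ∈ A t (tr t fun i => y i ω) := fun t ω => rfl
  have htrmem : ∀ t (v : Fin m → X) i, i ∈ idx m t → tr t v i = v i := by
    intro t v i hi
    simp only [htr, if_pos (mem_idx.mp hi)]
  have himg : ∀ t (v : Fin m → X), (idx m t).image (tr t v) = (idx m t).image v := by
    intro t v
    apply Finset.image_congr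
    intro i hi
    exact htrmem t v i hi
  have hgtr : ∀ t (v : Fin m → X), gv t (tr t v) = gv t v := by
    intro t v
    simp only [hgv, himg]
  have hfA : ∀ t (v : Fin m → X) ω, ω ∈ A t v → fk t ω = gv t v := by
    intro t v ω hω
    have h1 : tr t (fun i => y i ω) = v := hω
    calc fk t ω = gv t (tr t fun i => y i ω) := (hgtr t _).symm
      _ = gv t v := by rw [h1]
  have hSA : ∀ t (v : Fin m → X) ω, ω ∈ A t v →
      (idx m t).image (fun i => y i ω) = (idx m t).image v := by
    intro t v ω hω
    have hv : tr t (fun i => y i ω) = v := hω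
    rw [← himg t (fun i => y i ω), hv]
  have hpreB : ∀ (i : Fin m) (B : Finset X), MeasurableSet (y i ⁻¹' ↑B) :=
    fun i B => (hmeas i) B.measurableSet
  have hAmeas : ∀ t v, MeasurableSet (A t v) := by
    intro t v
    have : A t v = ⋂ i : Fin m, {ω | tr t (fun j => y j ω) i = v i} := by
      ext ω
      simp only [hA, Set.mem_setOf_eq, Set.mem_iInter, funext_iff]
    rw [this]
    apply MeasurableSet.iInter
    intro i
    by_cases hi : (i : ℕ) < t
    · have : {ω | tr t (fun j => y j ω) i = v i} = y i ⁻¹' {v i} := by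
        ext ω; simp [htr, hi]
      rw [this]
      exact (hmeas i) (measurableSet_singleton _)
    · have : {ω | tr t (fun j => y j ω) i = v i} = if x₀ = v i then Set.univ else ∅ := by
        split_ifs with h <;> ext ω <;> simp [htr, hi, h]
      rw [this]
      split_ifs <;> simp
  have hAdisj : ∀ t, Set.PairwiseDisjoint (↑(Finset.univ : Finset (Fin m → X))) (A t) := by
    intro t v _ w _ hvw
    apply Set.disjoint_left.mpr
    intro ω hv hw
    exact hvw ((hv : _ = v) ▸ (hw : _ = w) ▸ rfl)
  have hAcover : ∀ t, ⋃ v ∈ (Finset.univ : Finset (Fin m → X)), A t v = Set.univ := by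
    intro t
    apply Set.eq_univ_iff_forall.mpr
    intro ω
    exact Set.mem_biUnion (Finset.mem_univ _) (hAmem t ω)
  have hpart : ∀ t (h : Ω → ℝ≥0∞),
      ∫⁻ ω, h ω ∂μ = ∑ v : Fin m → X, ∫⁻ ω in A t v, h ω ∂μ := by
    intro t h
    rw [← setLIntegral_univ, ← hAcover t,
      lintegral_biUnion_finset (hAdisj t) (fun v _ => hAmeas t v)]
  have hEset : ∀ t, {ω | fk t ω < k} =
      ⋃ v ∈ Finset.univ.filter (fun v => gv t v < k), A t v := by
    intro t
    ext ω
    simp only [Set.mem_setOf_eq, Set.mem_iUnion, Finset.mem_filter, Finset.mem_univ, true_and]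
    constructor
    · intro h
      refine ⟨tr t (fun i => y i ω), ?_, hAmem t ω⟩
      rw [hgtr]
      exact h
    · rintro ⟨v, hv, hω⟩
      rw [hfA t v ω hω]
      exact hv
  have hEmeas : ∀ t, MeasurableSet {ω | fk t ω < k} := by
    intro t
    rw [hEset t]
    exact MeasurableSet.biUnion (Finset.countable_toSet _) (fun v _ => hAmeas t v)
  have hPt : ∀ t, μ {ω | fk t ω < k} =
      ∑ v ∈ Finset.univ.filter (fun v => gv t v < k), μ (A t v) := by
    intro t
    rw [hEset t]
    exact measure_biUnion_finset ((hAdisj t).subset (by simp)) (fun v _ => hAmeas t v)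
  have hconst : ∀ t v, ∫⁻ ω in A t v, (fk t ω : ℝ≥0∞) ∂μ = (gv t v : ℝ≥0∞) * μ (A t v) := by
    intro t v
    rw [setLIntegral_congr_fun (hAmeas t v)
      ((fun ω hω => by simp only [hfA t v ω hω]) :
        Set.EqOn (fun ω => (fk t ω : ℝ≥0∞)) (fun _ => (gv t v : ℝ≥0∞)) (A t v)),
      setLIntegral_const]
  have hμpre : ∀ (i : Fin m) (B : Finset X),
      μ (y i ⁻¹' ↑B) = ENNReal.ofReal (∑ b ∈ B, D b) := by
    intro i B
    have : y i ⁻¹' ↑B = ⋃ b ∈ B, y i ⁻¹' {b} := by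
      ext ω; simp
    rw [this, measure_biUnion_finset]
    · rw [ENNReal.ofReal_sum_of_nonneg (fun b _ => hD0 b)]
      refine Finset.sum_congr rfl (fun b _ => ?_)
      have : y i ⁻¹' {b} = {ω | y i ω = b} := by ext ω; simp
      rw [this, hlaw]
    · intro a _ b _ hab
      apply Set.disjoint_left.mpr
      intro ω ha hb
      exact hab ((Set.mem_preimage.mp ha).symm.trans (Set.mem_preimage.mp hb))
    · exact fun b _ => (hmeas i) (measurableSet_singleton b)
  -- independence
  have hAB : ∀ t (ht : t < m) (v : Fin m → X) (B : Finset X),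
      μ (A t v ∩ y ⟨t, ht⟩ ⁻¹' ↑B) = μ (A t v) * μ (y ⟨t, ht⟩ ⁻¹' ↑B) := by
    intro t ht v B
    by_cases hgood : ∀ i : Fin m, ¬ (i : ℕ) < t → v i = x₀
    · set j : Fin m := ⟨t, ht⟩ with hj
      have hjnot : j ∉ idx m t := by simp [mem_idx, hj]
      have hAeq : A t v = ⋂ i ∈ idx m t, y i ⁻¹' {v i} := by
        ext ω
        simp only [hA, Set.mem_setOf_eq, funext_iff, Set.mem_iInter, Set.mem_preimage,
          Set.mem_singleton_iff, mem_idx]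
        constructor
        · intro h i hi
          simpa [htr, hi] using h i
        · intro h i
          by_cases hi : (i : ℕ) < t
          · simpa [htr, hi] using h i hi
          · simpa [htr, hi] using (hgood i hi).symm
      set sets : Fin m → Set Ω := fun i => if i = j then y j ⁻¹' ↑B else y i ⁻¹' {v i}
        with hsets
      have hsets_meas : ∀ i ∈ insert j (idx m t),
          MeasurableSet[MeasurableSpace.comap (y i) inferInstance] (sets i) := by
        intro i _
        by_cases hi : i = j
        · subst hi
          exact ⟨↑B, B.measurableSet, by simp [hsets]⟩
        · exact ⟨{v i}, measurableSet_singleton _, by simp [hsets, hi]⟩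
      have hprod := hind.meas_biInter (S := insert j (idx m t)) hsets_meas
      have hprod2 := hind.meas_biInter (S := idx m t)
        (fun i _ => (⟨{v i}, measurableSet_singleton _, rfl⟩ :
          MeasurableSet[MeasurableSpace.comap (y i) inferInstance] (y i ⁻¹' {v i})))
      have hIeq : (⋂ i ∈ insert j (idx m t), sets i) = A t v ∩ y j ⁻¹' ↑B := by
        rw [Finset.set_biInter_insert, hsets]
        simp only [if_pos rfl]
        rw [hAeq, Set.inter_comm]
        congr 1
        refine Set.iInter₂_congr fun i hi => ?_
        have hij : i ≠ j := by rintro rfl; exact hjnot hi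
        rw [if_neg hij]
      rw [← hIeq, hprod, Finset.prod_insert hjnot]
      have hrest : ∀ i ∈ idx m t, μ (sets i) = μ (y i ⁻¹' {v i}) := by
        intro i hi
        have hij : i ≠ j := by rintro rfl; exact hjnot hi
        simp only [hsets, if_neg hij]
      have hjset : sets j = y j ⁻¹' ↑B := by simp [hsets]
      rw [Finset.prod_congr rfl hrest, ← hprod2, ← hAeq, hjset, mul_comm]
    · have hAe : A t v = ∅ := by
        ext ω
        simp only [hA, Set.mem_setOf_eq, Set.mem_empty_iff_false, iff_false, funext_iff]
        intro h
        rw [not_forall] at hgood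
        obtain ⟨i, hgi⟩ := hgood
        rw [Classical.not_imp] at hgi
        obtain ⟨hi, hne⟩ := hgi
        have := h i
        simp only [htr, if_neg hi] at this
        exact hne this.symm
      simp [hAe]
  -- the lower bound on the hit probability in one step
  have hhitB : ∀ t (v : Fin m → X), gv t v < k →
      ENNReal.ofReal ε ≤ ENNReal.ofReal (∑ b ∈ H \ (idx m t).image v, D b) := by
    intro t v hlt
    apply ENNReal.ofReal_le_ofReal
    have hcard : (H ∩ (idx m t).image v).card < k := by
      by_contra hge
      push_neg at hge
      have h1 : gv t v = k := min_eq_left hge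
      omega
    have := hhit (H ∩ (idx m t).image v) hcard.le
    have hsd : H \ (H ∩ (idx m t).image v) = H \ (idx m t).image v := by
      ext a; simp
    rwa [hsd] at this
  -- monotonicity of fk
  have hfmono : ∀ t t' ω, t ≤ t' → fk t ω ≤ fk t' ω := by
    intro t t' ω h
    simp only [hfk, hgv]
    exact min_le_min le_rfl (Finset.card_le_card
      (Finset.inter_subset_inter le_rfl (Finset.image_subset_image (idx_mono h))))
  -- the key per-set bound
  have hkey : ∀ t (ht : t < m) (v : Fin m → X),
      (gv t v : ℝ≥0∞) * μ (A t v)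
        + (if gv t v < k then ENNReal.ofReal ε * μ (A t v) else 0)
        ≤ ∫⁻ ω in A t v, (fk (t + 1) ω : ℝ≥0∞) ∂μ := by
    intro t ht v
    by_cases hlt : gv t v < k
    · rw [if_pos hlt]
      set j : Fin m := ⟨t, ht⟩ with hj
      set B : Finset X := H \ (idx m t).image v with hB
      have hcard : (H ∩ (idx m t).image v).card < k := by
        by_contra hge
        push_neg at hge
        have h1 : gv t v = k := min_eq_left hge
        omega
      have hgveq : gv t v = (H ∩ (idx m t).image v).card := by
        rw [hgv]; exact min_eq_right hcard.le
      -- pointwise lower bound on A t v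
      have hlb : ∀ ω ∈ A t v,
          (gv t v : ℝ≥0∞) + (y j ⁻¹' ↑B).indicator 1 ω ≤ (fk (t + 1) ω : ℝ≥0∞) := by
        intro ω hω
        have hS1 : (idx m (t + 1)).image (fun i => y i ω)
            = insert (y j ω) ((idx m t).image v) := by
          rw [idx_succ ht, Finset.image_insert, hSA t v ω hω]
        by_cases hmem : ω ∈ y j ⁻¹' ↑B
        · have hyB : y j ω ∈ B := hmem
          have hyH : y j ω ∈ H := (Finset.mem_sdiff.mp (hB ▸ hyB)).1
          have hynot : y j ω ∉ (idx m t).image v := (Finset.mem_sdiff.mp (hB ▸ hyB)).2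
          have hins : H ∩ insert (y j ω) ((idx m t).image v)
              = insert (y j ω) (H ∩ (idx m t).image v) := by
            ext a
            simp only [Finset.mem_inter, Finset.mem_insert]
            constructor
            · rintro ⟨h1, h2 | h2⟩
              · exact Or.inl h2
              · exact Or.inr ⟨h1, h2⟩
            · rintro (h | ⟨h1, h2⟩)
              · exact ⟨h ▸ hyH, Or.inl h⟩
              · exact ⟨h1, Or.inr h2⟩
          have hynot2 : y j ω ∉ H ∩ (idx m t).image v := by
            simp only [Finset.mem_inter]
            exact fun h => hynot h.2
          have hfval : fk (t + 1) ω = gv t v + 1 := by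
            have e1 : fk (t + 1) ω
                = min k (H ∩ (idx m (t + 1)).image (fun i => y i ω)).card := rfl
            rw [e1, hS1, hins, Finset.card_insert_of_notMem hynot2, hgveq]
            exact min_eq_right (by omega)
          rw [hfval, Set.indicator_of_mem hmem, Pi.one_apply]
          push_cast
          exact le_refl _
        · rw [Set.indicator_of_notMem hmem, add_zero]
          have h1 : gv t v = fk t ω := (hfA t v ω hω).symm
          have h2 : fk t ω ≤ fk (t + 1) ω := hfmono t (t+1) ω (by omega)
          exact_mod_cast h1 ▸ Nat.cast_le.mpr h2
      calc (gv t v : ℝ≥0∞) * μ (A t v) + ENNReal.ofReal ε * μ (A t v)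
          ≤ (gv t v : ℝ≥0∞) * μ (A t v) + μ (y j ⁻¹' ↑B ∩ A t v) := by
            gcongr
            rw [Set.inter_comm, hAB t ht v B]
            calc ENNReal.ofReal ε * μ (A t v)
                ≤ μ (y j ⁻¹' ↑B) * μ (A t v) := by
                  gcongr
                  rw [hμpre j B]
                  exact hhitB t v hlt
              _ = μ (A t v) * μ (y j ⁻¹' ↑B) := mul_comm _ _
        _ = ∫⁻ ω in A t v,
              ((gv t v : ℝ≥0∞) + (y j ⁻¹' ↑B).indicator 1 ω) ∂μ := by
            rw [lintegral_add_left measurable_const, setLIntegral_const,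
              lintegral_indicator_one (hpreB j B), Measure.restrict_apply (hpreB j B)]
        _ ≤ ∫⁻ ω in A t v, (fk (t + 1) ω : ℝ≥0∞) ∂μ :=
            setLIntegral_mono' (hAmeas t v) hlb
    · rw [if_neg hlt, add_zero]
      have : ∀ ω ∈ A t v, (gv t v : ℝ≥0∞) ≤ (fk (t + 1) ω : ℝ≥0∞) := by
        intro ω hω
        have h1 : gv t v = fk t ω := (hfA t v ω hω).symm
        have h2 : fk t ω ≤ fk (t + 1) ω := hfmono t (t+1) ω (by omega)
        exact_mod_cast h1 ▸ Nat.cast_le.mpr h2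
      calc (gv t v : ℝ≥0∞) * μ (A t v) = ∫⁻ _ in A t v, (gv t v : ℝ≥0∞) ∂μ :=
            (setLIntegral_const _ _).symm
        _ ≤ _ := setLIntegral_mono' (hAmeas t v) this
  -- summed increment
  have hstep : ∀ t, t < m →
      (∫⁻ ω, (fk t ω : ℝ≥0∞) ∂μ) + ENNReal.ofReal ε * μ {ω | fk t ω < k}
        ≤ ∫⁻ ω, (fk (t + 1) ω : ℝ≥0∞) ∂μ := by
    intro t ht
    rw [hpart t (fun ω => (fk t ω : ℝ≥0∞)), hpart t (fun ω => (fk (t + 1) ω : ℝ≥0∞)),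
      hPt t, Finset.mul_sum, Finset.sum_filter, ← Finset.sum_add_distrib]
    apply Finset.sum_le_sum
    intro v _
    rw [hconst t v]
    exact hkey t ht v
  -- decreasing failure probability
  have hPmono : ∀ t, t ≤ m → μ {ω | fk m ω < k} ≤ μ {ω | fk t ω < k} := by
    intro t htm
    apply measure_mono
    intro ω hω
    exact lt_of_le_of_lt (hfmono t m ω htm) hω
  -- iterate
  set Pm : ℝ≥0∞ := μ {ω | fk m ω < k} with hPm
  have hiter : ∀ t, t ≤ m →
      (t : ℝ≥0∞) * (ENNReal.ofReal ε * Pm) ≤ ∫⁻ ω, (fk t ω : ℝ≥0∞) ∂μ := by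
    intro t
    induction t with
    | zero => intro _; simp
    | succ t ih =>
      intro ht
      have ht' : t < m := ht
      have h1 : (t : ℝ≥0∞) * (ENNReal.ofReal ε * Pm) ≤ ∫⁻ ω, (fk t ω : ℝ≥0∞) ∂μ :=
        ih ht'.le
      have h2 : ENNReal.ofReal ε * Pm ≤ ENNReal.ofReal ε * μ {ω | fk t ω < k} := by
        gcongr
        exact hPmono t ht'.le
      calc ((t + 1 : ℕ) : ℝ≥0∞) * (ENNReal.ofReal ε * Pm)
          = (t : ℝ≥0∞) * (ENNReal.ofReal ε * Pm) + ENNReal.ofReal ε * Pm := by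
            push_cast; ring
        _ ≤ (∫⁻ ω, (fk t ω : ℝ≥0∞) ∂μ) + ENNReal.ofReal ε * μ {ω | fk t ω < k} :=
            add_le_add h1 h2
        _ ≤ _ := hstep t ht'
  have hLm : ∫⁻ ω, (fk m ω : ℝ≥0∞) ∂μ ≤ (k : ℝ≥0∞) := by
    calc ∫⁻ ω, (fk m ω : ℝ≥0∞) ∂μ ≤ ∫⁻ _, (k : ℝ≥0∞) ∂μ := by
          apply lintegral_mono
          intro ω
          exact_mod_cast Nat.cast_le.mpr (min_le_left _ _)
      _ = (k : ℝ≥0∞) := by simp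
  have hmain : (m : ℝ≥0∞) * (ENNReal.ofReal ε * Pm) ≤ (k : ℝ≥0∞) :=
    (hiter m le_rfl).trans hLm
  -- arithmetic: Pm ≤ 1/2
  have h2kε : ((2 * k : ℕ) : ℝ≥0∞) ≤ (m : ℝ≥0∞) * ENNReal.ofReal ε := by
    have : ((2 * k : ℕ) : ℝ≥0∞) = ENNReal.ofReal (2 * (k : ℝ)) := by
      rw [ENNReal.ofReal_mul (by norm_num)]
      push_cast
      rw [ENNReal.ofReal_ofNat, ENNReal.ofReal_natCast]
    rw [this, show (m : ℝ≥0∞) = ENNReal.ofReal (m : ℝ) from (ENNReal.ofReal_natCast m).symm,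
      ← ENNReal.ofReal_mul (by positivity)]
    exact ENNReal.ofReal_le_ofReal h2k
  have h2kPm : ((2 * k : ℕ) : ℝ≥0∞) * Pm ≤ (k : ℝ≥0∞) := by
    calc ((2 * k : ℕ) : ℝ≥0∞) * Pm ≤ ((m : ℝ≥0∞) * ENNReal.ofReal ε) * Pm := by
          gcongr
      _ = (m : ℝ≥0∞) * (ENNReal.ofReal ε * Pm) := by ring
      _ ≤ (k : ℝ≥0∞) := hmain
  have hPmhalf : Pm ≤ 2⁻¹ := by
    have hk0 : (k : ℝ≥0∞) ≠ 0 := by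
      exact_mod_cast Nat.cast_ne_zero.mpr (by omega)
    have hktop : (k : ℝ≥0∞) ≠ ⊤ := ENNReal.natCast_ne_top k
    have h2 : (2 : ℝ≥0∞) * ((k : ℝ≥0∞) * Pm) ≤ 2 * ((k : ℝ≥0∞) * 2⁻¹) := by
      calc (2 : ℝ≥0∞) * ((k : ℝ≥0∞) * Pm) = ((2 * k : ℕ) : ℝ≥0∞) * Pm := by
            push_cast; ring
        _ ≤ (k : ℝ≥0∞) := h2kPm
        _ = 2 * ((k : ℝ≥0∞) * 2⁻¹) := by
            rw [← mul_assoc, mul_comm (2 : ℝ≥0∞), mul_assoc,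
              ENNReal.mul_inv_cancel (by norm_num) (by norm_num), mul_one]
    have h3 : (k : ℝ≥0∞) * Pm ≤ (k : ℝ≥0∞) * 2⁻¹ :=
      (ENNReal.mul_le_mul_iff_right (by norm_num) (by norm_num)).mp h2
    exact (ENNReal.mul_le_mul_iff_right hk0 hktop).mp h3
  -- conclude
  have hgoal : {ω | k ≤ (H ∩ Finset.image (fun i => y i ω) Finset.univ).card}
      = {ω | fk m ω < k}ᶜ := by
    ext ω
    simp only [Set.mem_setOf_eq, Set.mem_compl_iff, not_lt, hfk, hgv, idx_self,
      le_min_iff, le_refl, true_and]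
  rw [hgoal, prob_compl_eq_one_sub (hEmeas m)]
  have hhalf : ENNReal.ofReal (1 / 2) = (2 : ℝ≥0∞)⁻¹ := by
    rw [show (1 : ℝ) / 2 = (2 : ℝ)⁻¹ by norm_num, ENNReal.ofReal_inv_of_pos (by norm_num),
      ENNReal.ofReal_ofNat]
  rw [hhalf]
  calc (2 : ℝ≥0∞)⁻¹ = 1 - 2⁻¹ := by
        rw [ENNReal.one_sub_inv_two]
    _ ≤ 1 - Pm := tsub_le_tsub_left hPmhalf 1

/-- if a distribution `D` `(ε,k)`-hits `H` (with `k ≥ 1`) and we draw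
`m = ⌈2k/ε⌉` i.i.d. samples from `D`, then with probability at least `1/2` the samples
contain at least `k` distinct elements of `H`. -/
theorem stmt11 {X : Type*} [Fintype X] [DecidableEq X] [MeasurableSpace X]
    [MeasurableSingletonClass X]
    (H : Finset X) (ε : ℝ) (hε : 0 < ε) (k : ℕ) (hk : 1 ≤ k)
    (D : X → ℝ) (hD0 : ∀ x, 0 ≤ D x) (hD1 : ∑ x, D x = 1)
    (hhit : Hits D H ε k)
    {Ω : Type*} [MeasurableSpace Ω] (μ : Measure Ω) [IsProbabilityMeasure μ]
    (y : Fin ⌈2 * (k : ℝ) / ε⌉₊ → Ω → X)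
    (hmeas : ∀ i, Measurable (y i))
    (hind : iIndepFun y μ)
    (hlaw : ∀ i a, μ {ω | y i ω = a} = ENNReal.ofReal (D a)) :
    ENNReal.ofReal (1 / 2) ≤
      μ {ω | k ≤ (H ∩ Finset.image (fun i => y i ω) Finset.univ).card} := by
  have hXne : Nonempty X := by
    rcases isEmpty_or_nonempty X with h | h
    · exfalso
      rw [Finset.univ_eq_empty, Finset.sum_empty] at hD1
      norm_num at hD1
    · exact h
  obtain ⟨x₀⟩ := hXne
  have h2k : 2 * (k : ℝ) ≤ (⌈2 * (k : ℝ) / ε⌉₊ : ℝ) * ε := by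
    have h1 : 2 * (k : ℝ) / ε ≤ (⌈2 * (k : ℝ) / ε⌉₊ : ℝ) := Nat.le_ceil _
    calc 2 * (k : ℝ) = 2 * (k : ℝ) / ε * ε := by field_simp
      _ ≤ (⌈2 * (k : ℝ) / ε⌉₊ : ℝ) * ε := by gcongr
  exact aux H ε hε k hk D hD0 hhit μ _ h2k y hmeas hind hlaw x₀
end

section
/- Let X be a finite type, H ⊆ X, 0 < ε ≤ 1 a real, and k ≥ 1 a natural number. Suppose a probability distribution 𝒟 on X (ε,k)-hits H. Let m := ⌈2k/ε⌉ and let 𝐱^{(1)},…,𝐱^{(m)} be random variables taking values in X that are pairwise independent with marginals from 𝒟 (for all i ≠ j, the joint law of (𝐱^{(i)},𝐱^{(j)}) is 𝒟 ⊗ 𝒟). Then the expected number of distinct elements of H among the samples satisfies E[ ∑_{x∈H} 1[x ∈ {𝐱^{(1)},…,𝐱^{(m)}}] ] ≥ k/4. -/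
open Finset MeasureTheory ProbabilityTheory

open scoped Classical in
lemma ind_integral {Ω : Type*} [MeasurableSpace Ω] (μ : Measure Ω) [IsFiniteMeasure μ]
    (A : Set Ω) (hA : MeasurableSet A) :
    ∫ ω, A.indicator (fun _ => (1:ℝ)) ω ∂μ = (μ A).toReal := by
  rw [integral_indicator_const (1:ℝ) hA, smul_eq_mul, mul_one]
  rfl

lemma ind_integrable {Ω : Type*} [MeasurableSpace Ω] (μ : Measure Ω) [IsFiniteMeasure μ]
    (A : Set Ω) (hA : MeasurableSet A) :
    Integrable (fun ω => A.indicator (fun _ => (1:ℝ)) ω) μ :=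
  (integrable_const 1).indicator hA

open scoped Classical in
lemma key_bound_s12 {X : Type*} [MeasurableSpace X] [MeasurableSingletonClass X]
    {Ω : Type*} [MeasurableSpace Ω] (μ : Measure Ω) [IsProbabilityMeasure μ]
    {m : ℕ} (x : Fin m → Ω → X) (hmeas : ∀ i, Measurable (x i))
    (Da : ℝ) (a : X) (hDa : 0 ≤ Da)
    (hmarg : ∀ i, μ {ω | x i ω = a} = ENNReal.ofReal Da)
    (hpair : ∀ i j, i ≠ j → μ {ω | x i ω = a ∧ x j ω = a} = ENNReal.ofReal (Da * Da))
    (T : Finset (Fin m)) (hT : (T.card : ℝ) * Da ≤ 1) :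
    (T.card : ℝ) * Da / 2 ≤ (μ {ω | ∃ i, x i ω = a}).toReal := by
  set A : Fin m → Set Ω := fun i => {ω | x i ω = a} with hA
  have hAm : ∀ i, MeasurableSet (A i) := fun i => (hmeas i) (measurableSet_singleton a)
  set U : Set Ω := {ω | ∃ i, x i ω = a} with hUdef
  have hU : MeasurableSet U := by
    have : U = ⋃ i, A i := by ext ω; simp [hUdef, hA]
    rw [this]; exact MeasurableSet.iUnion fun i => hAm i
  set χ : Fin m → Ω → ℝ := fun i => (A i).indicator (fun _ => (1:ℝ)) with hχ
  -- pointwise inclusion-exclusion inequality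
  have hptw : ∀ ω, (∑ i ∈ T, χ i ω) - (1/2) * (∑ i ∈ T, ∑ j ∈ T.erase i, χ i ω * χ j ω)
      ≤ U.indicator (fun _ => (1:ℝ)) ω := by
    intro ω
    set n : ℕ := (T.filter (fun i => ω ∈ A i)).card with hn
    have h1 : ∑ i ∈ T, χ i ω = (n:ℝ) := by
      rw [hn]; rw [← Finset.sum_boole]
      refine Finset.sum_congr rfl fun i _ => ?_
      by_cases h : ω ∈ A i <;> simp [hχ, Set.indicator_apply, h]
    have hsq : ∀ i, χ i ω * χ i ω = χ i ω := by
      intro i; by_cases h : ω ∈ A i <;> simp [hχ, Set.indicator_apply, h]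
    have h2 : ∑ i ∈ T, ∑ j ∈ T.erase i, χ i ω * χ j ω = (n:ℝ)^2 - n := by
      have e1 : ∀ i ∈ T, ∑ j ∈ T.erase i, χ i ω * χ j ω
          = (∑ j ∈ T, χ i ω * χ j ω) - χ i ω * χ i ω := by
        intro i hi
        rw [← Finset.add_sum_erase T _ hi]; ring
      rw [Finset.sum_congr rfl e1, Finset.sum_sub_distrib]
      have e2 : ∑ i ∈ T, ∑ j ∈ T, χ i ω * χ j ω = (n:ℝ)^2 := by
        rw [← Finset.sum_mul_sum, h1]; ring
      rw [e2]
      simp only [hsq, h1]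
    by_cases h : ∃ i ∈ T, ω ∈ A i
    · obtain ⟨i, hiT, hiA⟩ := h
      have hU1 : U.indicator (fun _ => (1:ℝ)) ω = 1 := by
        have : ω ∈ U := ⟨i, hiA⟩
        simp [Set.indicator_apply, this]
      have hn1 : 1 ≤ n := by
        rw [hn]
        exact Finset.card_pos.2 ⟨i, Finset.mem_filter.2 ⟨hiT, hiA⟩⟩
      rw [h1, h2, hU1]
      rcases Nat.lt_or_ge n 2 with h'|h'
      · have : n = 1 := le_antisymm (Nat.lt_succ_iff.1 h') hn1
        rw [this]; norm_num
      · have : (2:ℝ) ≤ n := by exact_mod_cast h'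
        nlinarith
    · have hn0 : n = 0 := by
        rw [hn, Finset.card_eq_zero, Finset.filter_eq_empty_iff]
        intro i hi hAi; exact h ⟨i, hi, hAi⟩
      rw [h1, h2, hn0]
      have : 0 ≤ U.indicator (fun _ => (1:ℝ)) ω :=
        Set.indicator_nonneg (fun _ _ => zero_le_one) ω
      push_cast; linarith
  -- integrability facts
  have hint1 : ∀ i, Integrable (fun ω => χ i ω) μ := fun i => ind_integrable μ _ (hAm i)
  have hprodeq : ∀ i j, (fun ω => χ i ω * χ j ω)
      = fun ω => (A i ∩ A j).indicator (fun _ => (1:ℝ)) ω := by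
    intro i j; ext ω
    by_cases hi : ω ∈ A i <;> by_cases hj : ω ∈ A j <;>
      simp [hχ, Set.indicator_apply, hi, hj]
  have hintp : ∀ i j, Integrable (fun ω => χ i ω * χ j ω) μ := by
    intro i j; rw [hprodeq i j]
    exact ind_integrable μ _ ((hAm i).inter (hAm j))
  have hint2 : Integrable (fun ω => ∑ i ∈ T, ∑ j ∈ T.erase i, χ i ω * χ j ω) μ := by
    apply integrable_finset_sum
    intro i _
    apply integrable_finset_sum
    intro j _
    exact hintp i j
  have hintL : Integrable
      (fun ω => (∑ i ∈ T, χ i ω) - (1/2) * (∑ i ∈ T, ∑ j ∈ T.erase i, χ i ω * χ j ω)) μ :=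
    (integrable_finset_sum T fun i _ => hint1 i).sub (hint2.const_mul _)
  -- compute integrals
  have hIχ : ∀ i, ∫ ω, χ i ω ∂μ = Da := by
    intro i
    rw [hχ]
    rw [ind_integral μ _ (hAm i)]
    rw [show μ (A i) = ENNReal.ofReal Da from hmarg i]
    exact ENNReal.toReal_ofReal hDa
  have hIp : ∀ i j, i ≠ j → ∫ ω, χ i ω * χ j ω ∂μ = Da * Da := by
    intro i j hij
    rw [hprodeq i j, ind_integral μ _ ((hAm i).inter (hAm j))]
    have : A i ∩ A j = {ω | x i ω = a ∧ x j ω = a} := rfl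
    rw [this, hpair i j hij]
    exact ENNReal.toReal_ofReal (mul_nonneg hDa hDa)
  have hInt : ∫ ω, ((∑ i ∈ T, χ i ω) - (1/2) * (∑ i ∈ T, ∑ j ∈ T.erase i, χ i ω * χ j ω)) ∂μ
      = (T.card : ℝ) * Da - (1/2) * ((T.card : ℝ) * ((T.card : ℝ) - 1) * (Da * Da)) := by
    rw [integral_sub (integrable_finset_sum T fun i _ => hint1 i) (hint2.const_mul _)]
    rw [integral_finset_sum T fun i _ => hint1 i]
    rw [integral_const_mul]
    rw [integral_finset_sum T fun i _ => (integrable_finset_sum _ fun j _ => hintp i j)]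
    have e3 : ∀ i ∈ T, ∫ ω, ∑ j ∈ T.erase i, χ i ω * χ j ω ∂μ
        = ((T.card : ℝ) - 1) * (Da * Da) := by
      intro i hi
      rw [integral_finset_sum _ fun j _ => hintp i j]
      have : ∀ j ∈ T.erase i, ∫ ω, χ i ω * χ j ω ∂μ = Da * Da := by
        intro j hj
        exact hIp i j (Finset.ne_of_mem_erase hj).symm
      rw [Finset.sum_congr rfl this, Finset.sum_const, Finset.card_erase_of_mem hi]
      rw [nsmul_eq_mul]
      congr 1
      have h1T : 1 ≤ T.card := Finset.card_pos.2 ⟨i, hi⟩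
      push_cast [Nat.cast_sub h1T]
      ring
    rw [Finset.sum_congr rfl e3, Finset.sum_congr rfl (fun i (_ : i ∈ T) => hIχ i),
      Finset.sum_const, Finset.sum_const]
    simp [nsmul_eq_mul]
    ring
  have hmono := integral_mono hintL (ind_integrable μ U hU) hptw
  rw [hInt, ind_integral μ U hU] at hmono
  have h0 : (0:ℝ) ≤ (T.card : ℝ) := Nat.cast_nonneg _
  nlinarith [mul_nonneg h0 hDa, mul_nonneg (mul_nonneg h0 hDa) hDa]

open scoped Classical in
/-- if a distribution `D` `(ε,k)`-hits `H` (with `0 < ε ≤ 1`, `k ≥ 1`) and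
`𝐱^{(1)},…,𝐱^{(m)}` (with `m = ⌈2k/ε⌉`) are pairwise independent with marginals `D`
(pairs distributed as `D ⊗ D`), then the expected number of distinct elements of `H`
among the samples is at least `k/4`. -/
theorem stmt12 {X : Type*} [Fintype X] [DecidableEq X] [MeasurableSpace X]
    [MeasurableSingletonClass X]
    (H : Finset X) (ε : ℝ) (hε0 : 0 < ε) (hε1 : ε ≤ 1) (k : ℕ) (hk : 1 ≤ k)
    (D : X → ℝ) (hD0 : ∀ x, 0 ≤ D x) (hD1 : ∑ x, D x = 1)
    (hhit : Hits D H ε k)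
    {Ω : Type*} [MeasurableSpace Ω] (μ : Measure Ω) [IsProbabilityMeasure μ]
    (x : Fin ⌈2 * (k : ℝ) / ε⌉₊ → Ω → X)
    (hmeas : ∀ i, Measurable (x i))
    (hmarg : ∀ i a, μ {ω | x i ω = a} = ENNReal.ofReal (D a))
    (hpair : ∀ i j, i ≠ j → ∀ a b,
      μ {ω | x i ω = a ∧ x j ω = b} = ENNReal.ofReal (D a * D b)) :
    (k : ℝ) / 4 ≤
      ∫ ω, ((H ∩ Finset.image (fun i => x i ω) Finset.univ).card : ℝ) ∂μ := by
  have hk1 : (1:ℝ) ≤ (k:ℝ) := by exact_mod_cast hk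
  have hceil : 2 * (k:ℝ) / ε ≤ (⌈2 * (k : ℝ) / ε⌉₊ : ℝ) := Nat.le_ceil _
  revert x hmeas hmarg hpair hceil
  generalize ⌈2 * (k : ℝ) / ε⌉₊ = m
  intro x hmeas hmarg hpair hmge
  have hDle1 : ∀ a, D a ≤ 1 := by
    intro a
    calc D a ≤ ∑ x, D x := Finset.single_le_sum (fun x _ => hD0 x) (Finset.mem_univ a)
    _ = 1 := hD1
  have hUm : ∀ a : X, MeasurableSet {ω | ∃ i, x i ω = a} := by
    intro a
    have : {ω | ∃ i, x i ω = a} = ⋃ i, {ω | x i ω = a} := by ext ω; simp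
    rw [this]
    exact MeasurableSet.iUnion fun i => (hmeas i) (measurableSet_singleton a)
  set P : X → ℝ := fun a => (μ {ω | ∃ i, x i ω = a}).toReal with hP
  have hPnn : ∀ a, 0 ≤ P a := fun a => ENNReal.toReal_nonneg
  -- Step A: the expected count equals the sum of hit probabilities
  have hstepA : ∫ ω, ((H ∩ Finset.image (fun i => x i ω) Finset.univ).card : ℝ) ∂μ
      = ∑ a ∈ H, P a := by
    have hptw : ∀ ω, ((H ∩ Finset.image (fun i => x i ω) Finset.univ).card : ℝ)
        = ∑ a ∈ H, Set.indicator {ω' | ∃ i, x i ω' = a} (fun _ => (1:ℝ)) ω := by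
      intro ω
      have e1 : H ∩ Finset.image (fun i => x i ω) Finset.univ
          = H.filter (fun a => ∃ i, x i ω = a) := by
        ext a; simp [Finset.mem_filter, Finset.mem_image, Finset.mem_inter]
      rw [e1, Finset.card_filter]
      push_cast
      refine Finset.sum_congr rfl fun a _ => ?_
      by_cases h : ∃ i, x i ω = a <;> simp [h, Set.indicator_apply]
    simp only [hptw]
    rw [integral_finset_sum H fun a _ => ind_integrable μ _ (hUm a)]
    exact Finset.sum_congr rfl fun a _ => ind_integral μ _ (hUm a)
  rw [hstepA]
  -- individual bounds
  have hbound1 : ∀ a, (m:ℝ) * D a ≤ 1 → (m:ℝ) * D a / 2 ≤ P a := by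
    intro a h
    have := key_bound_s12 μ x hmeas (D a) a (hD0 a) (fun i => hmarg i a)
      (fun i j hij => hpair i j hij a a) Finset.univ
      (by simpa [Finset.card_univ] using h)
    simpa [Finset.card_univ] using this
  have hbound2 : ∀ a, 1 < (m:ℝ) * D a → 1/4 ≤ P a := by
    intro a h
    have hDa0 : 0 < D a := by
      by_contra h'
      push_neg at h'
      nlinarith [Nat.cast_nonneg (α := ℝ) m]
    set t : ℕ := ⌊1 / D a⌋₊ with ht
    have h1D : 1 ≤ 1 / D a := by
      rw [le_div_iff₀ hDa0, one_mul]; exact hDle1 a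
    have ht1 : 1 ≤ t := by
      rw [ht]
      exact Nat.le_floor (by exact_mod_cast h1D)
    have htle : (t:ℝ) ≤ 1 / D a := Nat.floor_le (by positivity)
    have htD : (t:ℝ) * D a ≤ 1 := by
      rw [← le_div_iff₀ hDa0] at *; exact htle
    have htm : t ≤ m := by
      have h1 : (1:ℝ)/D a ≤ (m:ℝ) := by
        rw [div_le_iff₀ hDa0]; nlinarith
      calc t ≤ ⌊(m:ℝ)⌋₊ := Nat.floor_le_floor h1
      _ = m := Nat.floor_natCast m
    obtain ⟨T, -, hTcard⟩ := Finset.exists_subset_card_eq (s := (Finset.univ : Finset (Fin m))) (n := t)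
      (by simpa [Finset.card_univ] using htm)
    have hkey := key_bound_s12 μ x hmeas (D a) a (hD0 a) (fun i => hmarg i a)
      (fun i j hij => hpair i j hij a a) T (by rw [hTcard]; exact htD)
    rw [hTcard] at hkey
    have htD2 : 1/2 ≤ (t:ℝ) * D a := by
      have ht1' : (1:ℝ) ≤ (t:ℝ) := by exact_mod_cast ht1
      rcases le_or_gt (1 / D a) 2 with h'|h'
      · have : (1:ℝ)/2 ≤ D a := by
          rw [div_le_iff₀ hDa0] at h'; linarith
        nlinarith
      · have hflor : (1:ℝ)/D a - 1 < t := Nat.sub_one_lt_floor _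
        have hDhalf : D a < 1/2 := by
          rw [lt_div_iff₀ hDa0] at h'; linarith
        have : 1 - D a < (t:ℝ) * D a := by
          have := mul_lt_mul_of_pos_right hflor hDa0
          rw [sub_mul, div_mul_cancel₀ _ hDa0.ne'] at this
          linarith
        linarith
    linarith
  -- case split
  set B : Finset X := H.filter (fun a => 1 < (m:ℝ) * D a) with hB
  rcases le_or_gt k B.card with hcase|hcase
  · -- many heavy elements: each contributes at least 1/4
    have h1 : ∑ a ∈ B, (1/4 : ℝ) ≤ ∑ a ∈ B, P a := by
      refine Finset.sum_le_sum fun a ha => ?_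
      exact hbound2 a (Finset.mem_filter.1 ha).2
    have h2 : ∑ a ∈ B, P a ≤ ∑ a ∈ H, P a :=
      Finset.sum_le_sum_of_subset_of_nonneg (Finset.filter_subset _ _)
        (fun a _ _ => hPnn a)
    have h3 : (k:ℝ)/4 ≤ ∑ a ∈ B, (1/4 : ℝ) := by
      rw [Finset.sum_const, nsmul_eq_mul]
      have : (k:ℝ) ≤ (B.card : ℝ) := by exact_mod_cast hcase
      linarith
    linarith
  · -- few heavy elements: use the hitting property
    have hhit' := hhit B (le_of_lt hcase)
    have h1 : ∀ a ∈ H \ B, (m:ℝ) * D a / 2 ≤ P a := by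
      intro a ha
      rw [Finset.mem_sdiff, hB, Finset.mem_filter] at ha
      have : ¬ (1 < (m:ℝ) * D a) := fun h => ha.2 ⟨ha.1, h⟩
      push_neg at this
      exact hbound1 a this
    have h2 : ∑ a ∈ H \ B, ((m:ℝ) * D a / 2) ≤ ∑ a ∈ H \ B, P a :=
      Finset.sum_le_sum h1
    have h3 : ∑ a ∈ H \ B, P a ≤ ∑ a ∈ H, P a :=
      Finset.sum_le_sum_of_subset_of_nonneg (Finset.sdiff_subset)
        (fun a _ _ => hPnn a)
    have h4 : ∑ a ∈ H \ B, ((m:ℝ) * D a / 2) = (m:ℝ)/2 * ∑ a ∈ H \ B, D a := by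
      rw [Finset.mul_sum]; exact Finset.sum_congr rfl fun a _ => by ring
    have hm0 : (0:ℝ) ≤ (m:ℝ) := Nat.cast_nonneg _
    have h5 : (m:ℝ)/2 * ε ≤ (m:ℝ)/2 * ∑ a ∈ H \ B, D a := by
      apply mul_le_mul_of_nonneg_left hhit' (by linarith)
    have h6 : (k:ℝ) ≤ (m:ℝ)/2 * ε := by
      rw [div_le_iff₀ hε0] at hmge
      linarith
    linarith
end

section
/- Let n ∈ ℕ, let δ be a real number with 2^{−n} ≤ δ ≤ 1/2, let ε ≥ 4δ be real, let k ∈ ℕ, and let F be a finite family of probability distributions on {0,1}^n with |F| ≤ (1/10)·e^{εk/6}. Then there exists a set H ⊆ {0,1}^n with |H| > δ·2^n such that every 𝒟 ∈ F (ε,k)-misses H. (This is the union-bound core of the existence of dense evasive sets: instantiating F as the at most s^{O(n+s)} distributions generated by size-s Boolean circuits with k = O((s log s)/ε) yields, for every δ ≥ 2^{−n}, a δ-dense set H ⊆ {0,1}^n that (ε, O((s log s)/ε))-evades all size-s samplable distributions for all s ≥ n and ε ≥ 4δ.) -/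
open Finset

section Aux

variable {X : Type*} [Fintype X] [DecidableEq X]

lemma sum_pi_bool (g h : X → ℝ) :
    ∑ f : X → Bool, ∏ x, (if f x then g x else h x) = ∏ x, (g x + h x) := by
  rw [← Fintype.prod_sum (fun (x : X) (b : Bool) => if b then g x else h x)]
  simp

lemma chernoff (p t a : ℝ) (hp0 : 0 ≤ p) (hp1 : p ≤ 1) (ht : 0 ≤ t) (c : X → ℝ) :
    ∑ f : X → Bool,
      (if a ≤ ∑ x, (if f x then c x else 0) then ∏ x, (if f x then p else 1 - p) else 0)
      ≤ Real.exp (-(t * a)) * ∏ x, (1 - p + p * Real.exp (t * c x)) := by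
  have hw : ∀ f : X → Bool, 0 ≤ ∏ x, (if f x then p else 1 - p) := fun f =>
    Finset.prod_nonneg fun x _ => by split <;> linarith
  have step1 : ∀ f : X → Bool,
      (if a ≤ ∑ x, (if f x then c x else 0) then ∏ x, (if f x then p else 1 - p) else 0)
      ≤ Real.exp (-(t * a)) *
        ((∏ x, (if f x then p else 1 - p)) *
          Real.exp (t * ∑ x, (if f x then c x else 0))) := by
    intro f
    set S := ∑ x, (if f x then c x else 0) with hS
    split
    · next h =>
      have h1 : (1 : ℝ) ≤ Real.exp (-(t * a)) * Real.exp (t * S) := by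
        rw [← Real.exp_add]
        have h2 : (0 : ℝ) ≤ -(t * a) + t * S := by nlinarith
        calc (1 : ℝ) = Real.exp 0 := Real.exp_zero.symm
          _ ≤ _ := Real.exp_le_exp.2 h2
      nlinarith [hw f, Real.exp_pos (-(t * a)), Real.exp_pos (t * S)]
    · exact mul_nonneg (Real.exp_pos _).le (mul_nonneg (hw f) (Real.exp_pos _).le)
  calc ∑ f : X → Bool,
      (if a ≤ ∑ x, (if f x then c x else 0) then ∏ x, (if f x then p else 1 - p) else 0)
      ≤ ∑ f : X → Bool, Real.exp (-(t * a)) *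
        ((∏ x, (if f x then p else 1 - p)) *
          Real.exp (t * ∑ x, (if f x then c x else 0))) :=
        Finset.sum_le_sum fun f _ => step1 f
    _ = Real.exp (-(t * a)) * ∑ f : X → Bool,
          ∏ x, (if f x then p * Real.exp (t * c x) else 1 - p) := by
        rw [← Finset.mul_sum]
        congr 1
        refine Finset.sum_congr rfl fun f _ => ?_
        rw [Finset.mul_sum, Real.exp_sum, ← Finset.prod_mul_distrib]
        refine Finset.prod_congr rfl fun x _ => ?_
        cases hfx : f x <;> simp [hfx]
    _ = Real.exp (-(t * a)) * ∏ x, (p * Real.exp (t * c x) + (1 - p)) := by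
        rw [sum_pi_bool]
    _ = Real.exp (-(t * a)) * ∏ x, (1 - p + p * Real.exp (t * c x)) := by
        congr 1
        exact Finset.prod_congr rfl fun x _ => by ring

end Aux

set_option maxHeartbeats 1000000

/-- union-bound core of the existence of dense evasive sets: for
`2^{-n} ≤ δ ≤ 1/2`, `ε ≥ 4δ`, and any family `F` of at most `(1/10)·e^{εk/6}` probability
distributions on `{0,1}^n`, there is a set `H ⊆ {0,1}^n` with `|H| > δ·2^n` that every
distribution in `F` `(ε,k)`-misses. -/
theorem stmt14 (n : ℕ) (δ : ℝ) (hδlo : (2 : ℝ) ^ (-(n : ℤ)) ≤ δ) (hδhi : δ ≤ 1 / 2)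
    (ε : ℝ) (hε : 4 * δ ≤ ε) (k : ℕ)
    (F : Finset ((Fin n → Bool) → ℝ))
    (hpmf : ∀ D ∈ F, (∀ x, 0 ≤ D x) ∧ ∑ x, D x = 1)
    (hcard : (F.card : ℝ) ≤ (1 / 10) * Real.exp (ε * k / 6)) :
    ∃ H : Finset (Fin n → Bool),
      δ * 2 ^ n < (H.card : ℝ) ∧ ∀ D ∈ F, Misses D H ε k := by
  classical
  have hNpos : (0 : ℝ) < 2 ^ n := by positivity
  have hδpos : 0 < δ := lt_of_lt_of_le (by positivity) hδlo
  have hδN : (1 : ℝ) ≤ δ * 2 ^ n := by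
    have h1 : (2 : ℝ) ^ (-(n : ℤ)) * 2 ^ n = 1 := by
      rw [show ((2 : ℝ) ^ n) = (2 : ℝ) ^ (n : ℤ) from (zpow_natCast 2 n).symm,
        ← zpow_add₀ (by norm_num : (2:ℝ) ≠ 0)]
      norm_num
    calc (1 : ℝ) = (2 : ℝ) ^ (-(n : ℤ)) * 2 ^ n := h1.symm
      _ ≤ δ * 2 ^ n := mul_le_mul_of_nonneg_right hδlo (le_of_lt hNpos)
  have hcardX : ((Fintype.card (Fin n → Bool) : ℝ)) = 2 ^ n := by
    have : Fintype.card (Fin n → Bool) = 2 ^ n := by simp [Fintype.card_fun]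
    rw [this]; push_cast; ring
  by_cases hFe : F = ∅
  · refine ⟨Finset.univ, ?_, by simp [hFe]⟩
    rw [Finset.card_univ, hcardX]
    nlinarith
  have hFne : F.Nonempty := Finset.nonempty_of_ne_empty hFe
  have hF1 : (1 : ℝ) ≤ F.card := by exact_mod_cast Finset.card_pos.2 hFne
  have hεpos : 0 < ε := by linarith
  have hekpos : 0 < ε * k := by
    by_contra h
    push_neg at h
    have h1 : Real.exp (ε * k / 6) ≤ 1 := Real.exp_le_one_iff.2 (by linarith)
    nlinarith
  have hk1 : 1 ≤ k := by
    rcases Nat.eq_zero_or_pos k with hk | hk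
    · subst hk; norm_num at hekpos
    · exact hk
  have hkR : (1 : ℝ) ≤ (k : ℝ) := by exact_mod_cast hk1
  have hkpos : (0 : ℝ) < k := by linarith
  -- top-k sets
  have hTex : ∀ D : (Fin n → Bool) → ℝ, ∃ T : Finset (Fin n → Bool),
      D ∈ F → T.card ≤ k ∧ ∀ x, x ∉ T → D x ≤ 1 / k := by
    intro D
    by_cases hD : D ∈ F
    · obtain ⟨hpos, hsum⟩ := hpmf D hD
      refine ⟨Finset.univ.filter (fun x => 1 / (k : ℝ) < D x), fun _ => ⟨?_, ?_⟩⟩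
      · set T := Finset.univ.filter (fun x => 1 / (k : ℝ) < D x) with hTdef
        have h1 : ∑ _x ∈ T, (1 / (k : ℝ)) ≤ ∑ x ∈ T, D x :=
          Finset.sum_le_sum fun x hx => le_of_lt (by
            simp only [hTdef, Finset.mem_filter] at hx; exact hx.2)
        have h2 : ∑ x ∈ T, D x ≤ 1 := by
          rw [← hsum]
          exact Finset.sum_le_sum_of_subset_of_nonneg (Finset.subset_univ T)
            (fun x _ _ => hpos x)
        rw [Finset.sum_const, nsmul_eq_mul] at h1
        rw [mul_one_div] at h1
        have h4 := le_trans h1 h2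
        rw [div_le_one hkpos] at h4
        exact_mod_cast h4
      · intro x hx
        simp only [Finset.mem_filter, Finset.mem_univ, true_and, not_lt] at hx
        exact hx
    · exact ⟨∅, fun h => absurd h hD⟩
  choose T hT using hTex
  set c : ((Fin n → Bool) → ℝ) → (Fin n → Bool) → ℝ :=
    fun D x => if x ∈ T D then 0 else D x with hc
  by_contra hcon
  push_neg at hcon
  set p : ℝ := 2 * δ with hp
  have hp0 : 0 ≤ p := by positivity
  have hp1 : p ≤ 1 := by rw [hp]; linarith
  set w : ((Fin n → Bool) → Bool) → ℝ := fun f => ∏ x, (if f x then p else 1 - p) with hwdef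
  have hw0 : ∀ f, 0 ≤ w f := fun f =>
    Finset.prod_nonneg fun x _ => by split <;> linarith
  have hwsum : ∑ f : (Fin n → Bool) → Bool, w f = 1 := by
    simp only [hwdef]
    rw [sum_pi_bool (fun _ : Fin n → Bool => p) (fun _ => 1 - p)]
    rw [show (fun _ : Fin n → Bool => p + (1 - p)) = fun _ => (1 : ℝ) by ext x; ring]
    exact Finset.prod_const_one
  -- pointwise union bound
  have key : ∀ f : (Fin n → Bool) → Bool,
      w f ≤ (if (-(δ * 2 ^ n) : ℝ) ≤ ∑ x, (if f x then (-1 : ℝ) else 0) then w f else 0)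
        + ∑ D ∈ F, (if ε ≤ ∑ x, (if f x then c D x else 0) then w f else 0) := by
    intro f
    have hsumnn :
        0 ≤ ∑ D ∈ F, (if ε ≤ ∑ x, (if f x then c D x else 0) then w f else 0) :=
      Finset.sum_nonneg fun D _ => by split; exacts [hw0 f, le_rfl]
    by_cases hcd : δ * 2 ^ n < ((Finset.univ.filter fun x => f x = true).card : ℝ)
    · obtain ⟨D, hDF, hDm⟩ := hcon (Finset.univ.filter fun x => f x = true) hcd
      obtain ⟨hTcard, hTsmall⟩ := hT D hDF
      obtain ⟨hDpos, hDsum⟩ := hpmf D hDF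
      have h1 : ε ≤ ∑ x ∈ (Finset.univ.filter fun x => f x = true) \ T D, D x := by
        by_contra h
        push_neg at h
        exact hDm ⟨T D, hTcard, h⟩
      have h2 : ∑ x ∈ (Finset.univ.filter fun x => f x = true) \ T D, D x
          ≤ ∑ x, (if f x then c D x else 0) := by
        have hcnn : ∀ x, 0 ≤ c D x := fun x => by
          simp only [hc]; split; exacts [le_rfl, hDpos x]
        calc ∑ x ∈ (Finset.univ.filter fun x => f x = true) \ T D, D x
            = ∑ x ∈ (Finset.univ.filter fun x => f x = true) \ T D,
              (if f x then c D x else 0) := by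
              refine Finset.sum_congr rfl fun x hx => ?_
              rw [Finset.mem_sdiff, Finset.mem_filter] at hx
              rw [if_pos hx.1.2]
              simp only [hc]
              rw [if_neg hx.2]
          _ ≤ ∑ x, (if f x then c D x else 0) := by
              refine Finset.sum_le_sum_of_subset_of_nonneg (Finset.subset_univ _)
                fun x _ _ => ?_
              split
              · exact hcnn x
              · exact le_rfl
      have h3 : ε ≤ ∑ x, (if f x then c D x else 0) := le_trans h1 h2
      have h4 : w f ≤ ∑ D ∈ F, (if ε ≤ ∑ x, (if f x then c D x else 0) then w f else 0) := by
        have h5 := Finset.single_le_sum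
          (f := fun D => (if ε ≤ ∑ x, (if f x then c D x else 0) then w f else 0))
          (fun D _ => by split; exacts [hw0 f, le_rfl]) hDF
        rwa [if_pos h3] at h5
      have h5 : (0 : ℝ) ≤ (if (-(δ * 2 ^ n) : ℝ) ≤ ∑ x, (if f x then (-1 : ℝ) else 0)
          then w f else 0) := by split; exacts [hw0 f, le_rfl]
      linarith
    · push_neg at hcd
      have hcount : ∑ x, (if f x then (-1 : ℝ) else 0)
          = -(((Finset.univ.filter fun x => f x = true).card : ℝ)) := by
        have h6 : ∑ x, (if f x then (-1 : ℝ) else 0)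
            = -∑ x, (if f x then (1 : ℝ) else 0) := by
          rw [← Finset.sum_neg_distrib]
          exact Finset.sum_congr rfl fun x _ => by split <;> norm_num
        rw [h6, Finset.sum_boole]
      have hif : (-(δ * 2 ^ n) : ℝ) ≤ ∑ x, (if f x then (-1 : ℝ) else 0) := by
        rw [hcount]; linarith
      rw [if_pos hif]
      linarith
  have main : (1 : ℝ) ≤
      (∑ f : (Fin n → Bool) → Bool,
        (if (-(δ * 2 ^ n) : ℝ) ≤ ∑ x, (if f x then (-1 : ℝ) else 0) then w f else 0))
      + ∑ D ∈ F, ∑ f : (Fin n → Bool) → Bool,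
        (if ε ≤ ∑ x, (if f x then c D x else 0) then w f else 0) := by
    calc (1 : ℝ) = ∑ f : (Fin n → Bool) → Bool, w f := hwsum.symm
      _ ≤ ∑ f : (Fin n → Bool) → Bool,
          ((if (-(δ * 2 ^ n) : ℝ) ≤ ∑ x, (if f x then (-1 : ℝ) else 0) then w f else 0)
            + ∑ D ∈ F, (if ε ≤ ∑ x, (if f x then c D x else 0) then w f else 0)) :=
          Finset.sum_le_sum fun f _ => key f
      _ = _ := by rw [Finset.sum_add_distrib, Finset.sum_comm]
  have hlog2 : Real.exp (Real.log 2) = 2 := Real.exp_log two_pos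
  have hlog2lb : (0.6931471803 : ℝ) < Real.log 2 := Real.log_two_gt_d9
  have hlog2nn : (0 : ℝ) ≤ Real.log 2 := by linarith
  have hlog2le1 : Real.log 2 ≤ 1 := by
    have := Real.log_le_sub_one_of_pos two_pos; linarith
  -- bound on the cardinality tail
  have B1 : (∑ f : (Fin n → Bool) → Bool,
      (if (-(δ * 2 ^ n) : ℝ) ≤ ∑ x, (if f x then (-1 : ℝ) else 0) then w f else 0))
      ≤ Real.exp (Real.log 2 - 1) := by
    have hch := chernoff (X := Fin n → Bool) p (Real.log 2) (-(δ * 2 ^ n)) hp0 hp1 hlog2nn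
      (fun _ => (-1 : ℝ))
    refine le_trans hch ?_
    have hexpneg : Real.exp (Real.log 2 * (-1)) = 1 / 2 := by
      rw [mul_neg_one, Real.exp_neg, hlog2]
      norm_num
    have hterm : ∀ x : Fin n → Bool,
        1 - p + p * Real.exp (Real.log 2 * (fun _ : Fin n → Bool => (-1:ℝ)) x) = 1 - δ := by
      intro x
      show 1 - p + p * Real.exp (Real.log 2 * (-1)) = 1 - δ
      rw [hexpneg, hp]; ring
    rw [Finset.prod_congr rfl fun x _ => hterm x, Finset.prod_const, Finset.card_univ]
    have h1δ : (1 - δ : ℝ) ≤ Real.exp (-δ) := by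
      have := Real.add_one_le_exp (-δ); linarith
    have h1δ0 : (0 : ℝ) ≤ 1 - δ := by linarith
    calc Real.exp (-(Real.log 2 * -(δ * 2 ^ n))) * (1 - δ) ^ Fintype.card (Fin n → Bool)
        ≤ Real.exp (-(Real.log 2 * -(δ * 2 ^ n))) *
            Real.exp (-δ) ^ Fintype.card (Fin n → Bool) :=
          mul_le_mul_of_nonneg_left (pow_le_pow_left₀ h1δ0 h1δ _) (Real.exp_pos _).le
      _ = Real.exp (Real.log 2 * (δ * 2 ^ n) + (Fintype.card (Fin n → Bool) : ℝ) * (-δ)) := by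
          rw [← Real.exp_nat_mul, ← Real.exp_add]
          congr 1
          ring
      _ ≤ Real.exp (Real.log 2 - 1) := by
          apply Real.exp_le_exp.2
          rw [hcardX]
          nlinarith [mul_nonneg (sub_nonneg.2 hlog2le1) (sub_nonneg.2 hδN)]
  -- bound on each distribution tail
  have B2 : ∀ D ∈ F, (∑ f : (Fin n → Bool) → Bool,
      (if ε ≤ ∑ x, (if f x then c D x else 0) then w f else 0))
      ≤ Real.exp (-(ε * k / 6)) := by
    intro D hDF
    obtain ⟨hTcard, hTsmall⟩ := hT D hDF
    obtain ⟨hDpos, hDsum⟩ := hpmf D hDF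
    have hc0 : ∀ x, 0 ≤ c D x := fun x => by
      simp only [hc]; split; exacts [le_rfl, hDpos x]
    have hck : ∀ x, c D x ≤ 1 / k := fun x => by
      simp only [hc]; split
      · positivity
      · next hx => exact hTsmall x hx
    have hcsum : ∑ x, c D x ≤ 1 := by
      rw [← hDsum]
      refine Finset.sum_le_sum fun x _ => ?_
      simp only [hc]; split; exacts [hDpos x, le_rfl]
    set t : ℝ := Real.log 2 * k with htdef
    have ht0 : 0 ≤ t := by positivity
    have hch := chernoff (X := Fin n → Bool) p t ε hp0 hp1 ht0 (c D)
    refine le_trans hch ?_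
    have hprod : ∏ x, (1 - p + p * Real.exp (t * c D x)) ≤ Real.exp (p * k) := by
      have hx : ∀ x : Fin n → Bool,
          (1 - p + p * Real.exp (t * c D x)) ≤ Real.exp (p * k * c D x) := by
        intro x
        set y : ℝ := k * c D x with hy
        have hy0 : 0 ≤ y := mul_nonneg (le_of_lt hkpos) (hc0 x)
        have hy1 : y ≤ 1 := by
          calc y = (k : ℝ) * c D x := hy
            _ ≤ (k : ℝ) * (1 / k) := mul_le_mul_of_nonneg_left (hck x) (le_of_lt hkpos)
            _ = 1 := by field_simp
        have hconv : Real.exp (t * c D x) ≤ 1 + y := by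
          have harg : t * c D x = (1 - y) * 0 + y * Real.log 2 := by
            rw [htdef, hy]; ring
          have hcv := convexOn_exp.2 (Set.mem_univ (0 : ℝ)) (Set.mem_univ (Real.log 2))
            (by linarith : (0:ℝ) ≤ 1 - y) hy0 (by ring)
          simp only [smul_eq_mul] at hcv
          rw [harg]
          calc Real.exp ((1 - y) * 0 + y * Real.log 2)
              ≤ (1 - y) * Real.exp 0 + y * Real.exp (Real.log 2) := hcv
            _ = 1 + y := by rw [Real.exp_zero, hlog2]; ring
        have h1 : 1 - p + p * Real.exp (t * c D x) ≤ 1 + p * y := by nlinarith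
        have h2 : (1 : ℝ) + p * y ≤ Real.exp (p * y) := by
          have := Real.add_one_le_exp (p * y); linarith
        have h3 : p * y = p * k * c D x := by rw [hy]; ring
        rw [← h3]
        exact le_trans h1 h2
      calc ∏ x, (1 - p + p * Real.exp (t * c D x))
          ≤ ∏ x, Real.exp (p * k * c D x) := by
            refine Finset.prod_le_prod (fun x _ => ?_) (fun x _ => hx x)
            have := (Real.exp_pos (t * c D x)).le
            nlinarith
        _ = Real.exp (∑ x, p * k * c D x) := (Real.exp_sum _ _).symm
        _ ≤ Real.exp (p * k) := by
            apply Real.exp_le_exp.2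
            rw [← Finset.mul_sum]
            calc p * (k : ℝ) * ∑ x, c D x ≤ p * k * 1 :=
                mul_le_mul_of_nonneg_left hcsum (by positivity)
              _ = p * k := mul_one _
    calc Real.exp (-(t * ε)) * ∏ x, (1 - p + p * Real.exp (t * c D x))
        ≤ Real.exp (-(t * ε)) * Real.exp (p * k) :=
          mul_le_mul_of_nonneg_left hprod (Real.exp_pos _).le
      _ = Real.exp (p * k - t * ε) := by rw [← Real.exp_add]; congr 1; ring
      _ ≤ Real.exp (-(ε * k / 6)) := by
          apply Real.exp_le_exp.2
          rw [htdef, hp]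
          have hkk : (0:ℝ) ≤ (k:ℝ) := le_of_lt hkpos
          nlinarith [mul_nonneg hεpos.le hkk, mul_le_mul_of_nonneg_right hε hkk,
            mul_nonneg (mul_nonneg hεpos.le hkk) (sub_nonneg.2 hlog2le1)]
  -- combine
  have hsum2 : ∑ D ∈ F, ∑ f : (Fin n → Bool) → Bool,
      (if ε ≤ ∑ x, (if f x then c D x else 0) then w f else 0)
      ≤ (F.card : ℝ) * Real.exp (-(ε * k / 6)) := by
    calc ∑ D ∈ F, ∑ f : (Fin n → Bool) → Bool,
        (if ε ≤ ∑ x, (if f x then c D x else 0) then w f else 0)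
        ≤ ∑ _D ∈ F, Real.exp (-(ε * k / 6)) := Finset.sum_le_sum B2
      _ = (F.card : ℝ) * Real.exp (-(ε * k / 6)) := by
          rw [Finset.sum_const, nsmul_eq_mul]
  have hFbound : (F.card : ℝ) * Real.exp (-(ε * k / 6)) ≤ 1 / 10 := by
    calc (F.card : ℝ) * Real.exp (-(ε * k / 6))
        ≤ (1 / 10) * Real.exp (ε * k / 6) * Real.exp (-(ε * k / 6)) :=
          mul_le_mul_of_nonneg_right hcard (Real.exp_pos _).le
      _ = 1 / 10 := by
          rw [mul_assoc, ← Real.exp_add]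
          norm_num
  have hB1num : Real.exp (Real.log 2 - 1) < 9 / 10 := by
    have he : Real.exp (Real.log 2 - 1) = 2 / Real.exp 1 := by
      rw [Real.exp_sub, hlog2]
    rw [he, div_lt_iff₀ (Real.exp_pos 1)]
    nlinarith [Real.exp_one_gt_d9]
  linarith
end
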